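/- If X, Y ⊆ ℝⁿ are bi-Lipschitz homeomorphic, then there exists a bi-Lipschitz homeomorphism Φ : ℝ²ⁿ → ℝ²ⁿ with Φ(X × {0}) = {0} × Y. -/

import Mathlib

/-!
Extend `φ` and `φ⁻¹` to Lipschitz maps `F, G` of the whole space (possible in finite dimension).
The shears `σ (x, y) = (x, y + F x)` and `τ (x, y) = (x + G y, y)` are bi-Lipschitz with inverses
the shears by `-F`, `-G`, and they carry `X × {0}` and `{0} × Y` respectively onto the same set,
the graph of `φ`. So `Φ = τ⁻¹ ∘ σ` works.
-/

open Set

open scoped NNReal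

def BilipschitzWith {α β : Type*} [PseudoEMetricSpace α] [PseudoEMetricSpace β]
    (K : ℝ≥0) (e : α ≃ β) : Prop :=
  LipschitzWith K e ∧ LipschitzWith K e.symm

namespace BilipschitzWith

variable {α β γ : Type*} [PseudoEMetricSpace α] [PseudoEMetricSpace β] [PseudoEMetricSpace γ]
  {K₁ K₂ : ℝ≥0} {e₁ : α ≃ β} {e₂ : β ≃ γ}

theorem symm (h : BilipschitzWith K₁ e₁) : BilipschitzWith K₁ e₁.symm :=
  ⟨h.2, h.1⟩

theorem trans (h₁ : BilipschitzWith K₁ e₁) (h₂ : BilipschitzWith K₂ e₂) :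
    BilipschitzWith (K₂ * K₁) (e₁.trans e₂) :=
  ⟨h₂.1.comp h₁.1, mul_comm K₁ K₂ ▸ h₁.2.comp h₂.2⟩

end BilipschitzWith

section Shear

variable {α β : Type*}

def shearSnd [AddGroup β] (f : α → β) : α × β ≃ α × β where
  toFun p := (p.1, p.2 + f p.1)
  invFun p := (p.1, p.2 - f p.1)
  left_inv p := by simp
  right_inv p := by simp

def shearFst [AddGroup α] (g : β → α) : α × β ≃ α × β where
  toFun p := (p.1 + g p.2, p.2)
  invFun p := (p.1 - g p.2, p.2)
  left_inv p := by simp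
  right_inv p := by simp

theorem shearSnd_symm [AddGroup β] (f : α → β) : (shearSnd f).symm = shearSnd (-f) := by
  ext p <;> simp [shearSnd, sub_eq_add_neg]

theorem shearFst_symm [AddGroup α] (g : β → α) : (shearFst g).symm = shearFst (-g) := by
  ext p <;> simp [shearFst, sub_eq_add_neg]

theorem image_shearSnd_prod_zero [AddGroup β] (f : α → β) (s : Set α) :
    shearSnd f '' (s ×ˢ {0}) = s.graphOn f := by
  ext ⟨x, y⟩
  simp [shearSnd, eq_comm]

theorem image_shearFst_zero_prod [AddGroup α] (g : β → α) (t : Set β) :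
    shearFst g '' ({0} ×ˢ t) = Prod.swap ⁻¹' t.graphOn g := by
  ext ⟨x, y⟩
  simp [shearFst, eq_comm, and_comm]

variable {K : ℝ≥0}

theorem lipschitzWith_shearSnd [PseudoEMetricSpace α] [SeminormedAddCommGroup β] {f : α → β}
    (hf : LipschitzWith K f) : LipschitzWith (1 + K) (shearSnd f) :=
  (LipschitzWith.prod_fst.prodMk
    (LipschitzWith.prod_snd.add (hf.comp LipschitzWith.prod_fst))).weaken (by simp)

theorem lipschitzWith_shearFst [SeminormedAddCommGroup α] [PseudoEMetricSpace β] {g : β → α}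
    (hg : LipschitzWith K g) : LipschitzWith (1 + K) (shearFst g) :=
  ((LipschitzWith.prod_fst.add (hg.comp LipschitzWith.prod_snd)).prodMk
    LipschitzWith.prod_snd).weaken (by simp)

theorem bilipschitzWith_shearSnd [PseudoEMetricSpace α] [SeminormedAddCommGroup β] {f : α → β}
    (hf : LipschitzWith K f) : BilipschitzWith (1 + K) (shearSnd f) :=
  ⟨lipschitzWith_shearSnd hf, shearSnd_symm f ▸ lipschitzWith_shearSnd hf.neg⟩

theorem bilipschitzWith_shearFst [SeminormedAddCommGroup α] [PseudoEMetricSpace β] {g : β → α}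
    (hg : LipschitzWith K g) : BilipschitzWith (1 + K) (shearFst g) :=
  ⟨lipschitzWith_shearFst hg, shearFst_symm g ▸ lipschitzWith_shearFst hg.neg⟩

end Shear

theorem LipschitzWith.exists_lipschitzWith_extension {α E : Type*} [PseudoMetricSpace α]
    [NormedAddCommGroup E] [NormedSpace ℝ E] [FiniteDimensional ℝ E] {s : Set α} {K : ℝ≥0}
    {f : s → E} (hf : LipschitzWith K f) :
    ∃ (F : α → E) (K' : ℝ≥0), LipschitzWith K' F ∧ ∀ x : s, F x = f x := by
  set g := Function.extend Subtype.val f 0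
  have hg : ∀ x : s, g x = f x := Subtype.val_injective.extend_apply f 0
  have hgs : LipschitzOnWith K g s := by
    rw [lipschitzOnWith_iff_restrict]
    convert hf using 1
    funext x
    exact hg x
  obtain ⟨F, hF, hFg⟩ := hgs.extend_finite_dimension
  exact ⟨F, _, hF, fun x => (hFg x.2).symm.trans (hg x)⟩

theorem graphOn_eq_preimage_swap_graphOn {α β : Type*} {s : Set α} {t : Set β} (e : s ≃ t)
    {f : α → β} {g : β → α} (hf : ∀ x : s, f x = e x) (hg : ∀ y : t, g y = e.symm y) :
    s.graphOn f = Prod.swap ⁻¹' t.graphOn g := by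
  ext ⟨x, y⟩
  simp only [mem_graphOn, mem_preimage, Prod.fst_swap, Prod.snd_swap]
  constructor
  · rintro ⟨hx, rfl⟩
    rw [hf ⟨x, hx⟩, hg (e ⟨x, hx⟩), e.symm_apply_apply]
    exact ⟨(e ⟨x, hx⟩).2, rfl⟩
  · rintro ⟨hy, rfl⟩
    rw [hg ⟨y, hy⟩, hf (e.symm ⟨y, hy⟩), e.apply_symm_apply]
    exact ⟨(e.symm ⟨y, hy⟩).2, rfl⟩

theorem stmt_2 {n : ℕ} (X Y : Set (EuclideanSpace ℝ (Fin n)))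
    (h : ∃ (φ : X ≃ Y) (Kφ Kψ : NNReal),
      LipschitzWith Kφ (fun x : X => (φ x : EuclideanSpace ℝ (Fin n))) ∧
      LipschitzWith Kψ (fun y : Y => (φ.symm y : EuclideanSpace ℝ (Fin n)))) :
    ∃ (Φ : (EuclideanSpace ℝ (Fin n) × EuclideanSpace ℝ (Fin n)) ≃
           (EuclideanSpace ℝ (Fin n) × EuclideanSpace ℝ (Fin n))) (K : NNReal),
      LipschitzWith K Φ ∧ LipschitzWith K Φ.symm ∧
      Φ '' (X ×ˢ ({0} : Set (EuclideanSpace ℝ (Fin n)))) =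
        ({0} : Set (EuclideanSpace ℝ (Fin n))) ×ˢ Y := by
  obtain ⟨φ, Kφ, Kψ, hφ, hψ⟩ := h
  obtain ⟨F, KF, hF, hFφ⟩ := hφ.exists_lipschitzWith_extension
  obtain ⟨G, KG, hG, hGψ⟩ := hψ.exists_lipschitzWith_extension
  have hΦ := (bilipschitzWith_shearSnd hF).trans (bilipschitzWith_shearFst hG).symm
  refine ⟨_, _, hΦ.1, hΦ.2, ?_⟩
  rw [Equiv.coe_trans, image_comp, image_shearSnd_prod_zero,
    graphOn_eq_preimage_swap_graphOn φ hFφ hGψ, ← image_shearFst_zero_prod, Equiv.symm_image_image]
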